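/- arXiv:2007.11080 — 3 statements merged into one kernel-verified Lean document; each statement's English description precedes it below -/
import Mathlib

section
/- Let k ≥ 1 be an integer, let a_m > 0 with m·a_m^k → a ∈ (0,∞) as m → ∞, and for each m let G_{m,1},…,G_{m,m} be i.i.d. Gamma(k, 1/a_m) random variables. Then for each fixed t ≥ 0 and integer p ≥ 0, P(#{i ≤ m : G_{m,i} ≤ t} = p) converges as m → ∞ to (a t^k/k!)^p e^{-a t^k/k!} / p!, i.e., the counting variable converges in distribution to Poisson(a t^k / k!). -/
open MeasureTheory ProbabilityTheory Real Set Filter Finset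
open scoped ENNReal

/-! By independence the count is binomial with success probability
`q_m = P(Gamma(k, 1/a_m) ≤ t) = a_m^k/(k-1)! ∫₀ᵗ x^(k-1) e^(-a_m x) dx`. Bounding `e^(-a_m x)` between
`e^(-a_m t)` and `1` on `[0, t]` squeezes `q_m` between `e^(-a_m t) (a_m t)^k/k!` and `(a_m t)^k/k!`;
since `a_m → 0`, `m q_m → a t^k/k!`, and the Poisson limit theorem for binomial probabilities
applies. -/

section Counting

variable {Ω ι β : Type*} [Fintype ι] {X : ι → Ω → β} {S : Set β} [DecidablePred (· ∈ S)]

lemma setOf_filter_mem_eq_iInter [DecidableEq ι] (s : Finset ι) :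
    {ω | ({i | X i ω ∈ S} : Finset ι) = s} = ⋂ i, X i ⁻¹' (if i ∈ s then S else Sᶜ) := by
  ext ω
  simp only [mem_ofPred_eq, Finset.ext_iff, Finset.mem_filter, Finset.mem_univ, true_and,
    mem_iInter]
  refine forall_congr' fun i => ?_
  split_ifs with hi <;> simp [hi]

variable [MeasurableSpace Ω] {μ : Measure Ω} [IsProbabilityMeasure μ] [MeasurableSpace β]
  {q : ℝ≥0∞}

lemma measure_filter_mem_eq_pow_mul_pow (hX : ∀ i, Measurable (X i)) (hindep : iIndepFun X μ)
    (hS : MeasurableSet S) (hq : ∀ i, μ (X i ⁻¹' S) = q) (s : Finset ι) :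
    μ {ω | ({i | X i ω ∈ S} : Finset ι) = s} = q ^ #s * (1 - q) ^ (Fintype.card ι - #s) := by
  classical
  have hpiece : ∀ i, μ (X i ⁻¹' (if i ∈ s then S else Sᶜ)) = if i ∈ s then q else 1 - q := by
    intro i
    split_ifs
    · exact hq i
    · rw [preimage_compl, prob_compl_eq_one_sub (hX i hS), hq i]
  rw [setOf_filter_mem_eq_iInter,
    hindep.meas_iInter fun i => ⟨_, by split_ifs; exacts [hS, hS.compl], rfl⟩]
  simp only [hpiece, Finset.prod_ite, Finset.prod_const, Finset.filter_mem_eq_inter,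
    Finset.univ_inter, Finset.filter_not, Finset.card_univ_sdiff]

lemma measure_card_filter_mem_eq (hX : ∀ i, Measurable (X i)) (hindep : iIndepFun X μ)
    (hS : MeasurableSet S) (hq : ∀ i, μ (X i ⁻¹' S) = q) (p : ℕ) :
    μ {ω | #{i | X i ω ∈ S} = p}
      = (Fintype.card ι).choose p * q ^ p * (1 - q) ^ (Fintype.card ι - p) := by
  have hset : {ω | #{i | X i ω ∈ S} = p}
      = ⋃ s ∈ powersetCard p univ, {ω | ({i | X i ω ∈ S} : Finset ι) = s} := by
    ext ω
    simp
  have hmeas : ∀ s : Finset ι, MeasurableSet {ω | ({i | X i ω ∈ S} : Finset ι) = s} := by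
    classical
    intro s
    rw [setOf_filter_mem_eq_iInter]
    exact .iInter fun i => hX i (by split_ifs; exacts [hS, hS.compl])
  rw [hset, measure_biUnion_finset ?_ fun s _ => hmeas s]
  · rw [Finset.sum_congr rfl fun s hs => by
      rw [measure_filter_mem_eq_pow_mul_pow hX hindep hS hq, mem_powersetCard_univ.1 hs]]
    simp [mul_assoc]
  · intro s _ s' _ hss'
    exact Set.disjoint_left.2 fun ω hω hω' => hss' (hω.symm.trans hω')

end Counting

lemma Filter.Tendsto.of_pow_nhds_zero {α : Type*} {l : Filter α} {f : α → ℝ} {k : ℕ}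
    (hk : k ≠ 0) (hf : ∀ x, 0 ≤ f x) (h : Tendsto (fun x => f x ^ k) l (nhds 0)) :
    Tendsto f l (nhds 0) := by
  have := h.rpow_const (p := (k : ℝ)⁻¹) (Or.inr (by positivity))
  rw [zero_rpow (by positivity)] at this
  exact this.congr fun x => pow_rpow_inv_natCast (hf x) hk

lemma integral_pow_pred {k : ℕ} (hk : k ≠ 0) (t : ℝ) :
    ∫ x in 0..t, x ^ (k - 1) = t ^ k / k := by
  rw [integral_pow, Nat.sub_add_cancel (Nat.pos_of_ne_zero hk), zero_pow hk, sub_zero,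
    Nat.cast_pred (Nat.pos_of_ne_zero hk), sub_add_cancel]

variable {k : ℕ} {r t : ℝ}

lemma integral_pow_mul_exp_neg_mul_le (hk : k ≠ 0) (hr : 0 ≤ r) (ht : 0 ≤ t) :
    ∫ x in 0..t, x ^ (k - 1) * exp (-(r * x)) ≤ t ^ k / k := by
  rw [← integral_pow_pred hk]
  refine intervalIntegral.integral_mono_on ht
    ((by fun_prop : Continuous _).intervalIntegrable _ _)
    ((by fun_prop : Continuous _).intervalIntegrable _ _) fun x hx => ?_
  have : exp (-(r * x)) ≤ 1 := exp_le_one_iff.2 (by nlinarith [hx.1])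
  nlinarith [pow_nonneg hx.1 (k - 1)]

lemma exp_neg_mul_mul_le_integral_pow_mul_exp_neg_mul (hk : k ≠ 0) (hr : 0 ≤ r) (ht : 0 ≤ t) :
    exp (-(r * t)) * (t ^ k / k) ≤ ∫ x in 0..t, x ^ (k - 1) * exp (-(r * x)) := by
  rw [← integral_pow_pred hk, ← intervalIntegral.integral_const_mul]
  refine intervalIntegral.integral_mono_on ht
    ((by fun_prop : Continuous _).intervalIntegrable _ _)
    ((by fun_prop : Continuous _).intervalIntegrable _ _) fun x hx => ?_
  have : exp (-(r * t)) ≤ exp (-(r * x)) := exp_le_exp.2 (by nlinarith [hx.2])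
  nlinarith [pow_nonneg hx.1 (k - 1)]

lemma gammaMeasure_real_Iic_eq_integral (hk : k ≠ 0) (hr : 0 < r) (ht : 0 ≤ t) :
    (gammaMeasure k r).real (Iic t)
      = r ^ k / (k - 1).factorial * ∫ x in 0..t, x ^ (k - 1) * exp (-(r * x)) := by
  have hkR : (0 : ℝ) < k := by positivity
  have := isProbabilityMeasure_gammaMeasure hkR hr
  have hGamma : Gamma k = (k - 1).factorial := by
    rw [← Gamma_nat_eq_factorial, Nat.cast_pred (Nat.pos_of_ne_zero hk), sub_add_cancel]
  have hpdf : EqOn (gammaPDFReal k r)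
      (fun x => r ^ k / (k - 1).factorial * (x ^ (k - 1) * exp (-(r * x)))) (Ici 0) := by
    intro x hx
    rw [gammaPDFReal, if_pos (mem_Ici.1 hx), hGamma, ← Nat.cast_pred (Nat.pos_of_ne_zero hk),
      rpow_natCast, rpow_natCast]
    ring
  rw [← cdf_eq_real, cdf_gammaMeasure_eq_integral hkR hr,
    setIntegral_eq_of_subset_of_forall_sdiff_eq_zero measurableSet_Iic
      (Icc_subset_Iic_self (a := 0)) fun x hx => by
        rw [gammaPDFReal, if_neg fun h0 => hx.2 ⟨h0, hx.1⟩],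
    integral_Icc_eq_integral_Ioc, ← intervalIntegral.integral_of_le ht,
    intervalIntegral.integral_congr fun x hx => hpdf (uIcc_of_le ht ▸ hx).1,
    intervalIntegral.integral_const_mul]

lemma tendsto_mul_gammaMeasure_real_Iic (hk : k ≠ 0) {r : ℕ → ℝ} (hr : ∀ m, 0 < r m) {a : ℝ}
    (hlim : Tendsto (fun m : ℕ => m * r m ^ k) atTop (nhds a)) (ht : 0 ≤ t) :
    Tendsto (fun m : ℕ => m * (gammaMeasure k (r m)).real (Iic t)) atTop
      (nhds (a * t ^ k / k.factorial)) := by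
  have hr0 : Tendsto r atTop (nhds 0) :=
    (tendsto_zero_of_tendsto_mul_atTop hlim).of_pow_nhds_zero hk fun m => (hr m).le
  have hexp : Tendsto (fun m => exp (-(r m * t)) * (t ^ k / k)) atTop (nhds (t ^ k / k)) := by
    simpa using ((hr0.mul_const t).neg.rexp).mul_const (t ^ k / k)
  have hI : Tendsto (fun m => ∫ x in 0..t, x ^ (k - 1) * exp (-(r m * x))) atTop
      (nhds (t ^ k / k)) :=
    tendsto_of_tendsto_of_tendsto_of_le_of_le hexp tendsto_const_nhds
      (fun m => exp_neg_mul_mul_le_integral_pow_mul_exp_neg_mul hk (hr m).le ht)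
      (fun m => integral_pow_mul_exp_neg_mul_le hk (hr m).le ht)
  have hfac : (k.factorial : ℝ) = k * (k - 1).factorial := by
    rw [← Nat.mul_factorial_pred hk, Nat.cast_mul]
  convert hlim.mul (hI.div_const ((k - 1).factorial : ℝ)) using 1
  · ext m
    rw [gammaMeasure_real_Iic_eq_integral hk (hr m) ht]
    ring
  · rw [hfac]
    field_simp

theorem gamma_count_tendsto_poisson_general
    (k : ℕ) (hk : 1 ≤ k) (a : ℝ)
    (am : ℕ → ℝ) (ham : ∀ m, 0 < am m)
    (hlim : Tendsto (fun m : ℕ => (m : ℝ) * (am m) ^ k) atTop (nhds a))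
    (Ω : ℕ → Type*) (mΩ : ∀ m, MeasurableSpace (Ω m))
    (μ : ∀ m, Measure (Ω m)) (hμ : ∀ m, IsProbabilityMeasure (μ m))
    (G : ∀ m, Fin m → Ω m → ℝ)
    (hmeas : ∀ m i, Measurable (G m i))
    (hindep : ∀ m, iIndepFun (G m) (μ m))
    (hlaw : ∀ m i, Measure.map (G m i) (μ m) = gammaMeasure k (am m))
    (t : ℝ) (ht : 0 ≤ t) (p : ℕ) :
    Tendsto
      (fun m : ℕ =>
        ((μ m) {ω | (Finset.univ.filter (fun i : Fin m => G m i ω ≤ t)).card = p}).toReal)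
      atTop
      (nhds ((a * t ^ k / (Nat.factorial k)) ^ p *
        Real.exp (-(a * t ^ k / (Nat.factorial k))) / (Nat.factorial p))) := by
  have hk0 : k ≠ 0 := Nat.one_le_iff_ne_zero.1 hk
  set q : ℕ → ℝ := fun m => (gammaMeasure k (am m)).real (Iic t)
  have hcount : ∀ m, ((μ m) {ω | #{i | G m i ω ≤ t} = p}).toReal
      = m.choose p * q m ^ p * (1 - q m) ^ (m - p) := by
    intro m
    have := hμ m
    have := isProbabilityMeasure_gammaMeasure (a := k) (by positivity) (ham m)
    have hq : ∀ i, μ m (G m i ⁻¹' Iic t) = gammaMeasure k (am m) (Iic t) := fun i => by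
      rw [← hlaw m i, Measure.map_apply (hmeas m i) measurableSet_Iic]
    have h := measure_card_filter_mem_eq (hmeas m) (hindep m) measurableSet_Iic hq p
    rw [Fintype.card_fin] at h
    -- `x ∈ Iic t` unfolds to `x ≤ t`, decidability instance included
    rw [show {ω | #{i | G m i ω ≤ t} = p} = {ω | #{i | G m i ω ∈ Iic t} = p} from rfl, h,
      ENNReal.toReal_mul, ENNReal.toReal_mul, ENNReal.toReal_pow, ENNReal.toReal_pow,
      ENNReal.toReal_natCast, ENNReal.toReal_sub_of_le prob_le_one ENNReal.one_ne_top,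
      ENNReal.toReal_one]
    rfl
  rw [mul_comm _ (exp _)]
  exact (tendsto_choose_mul_pow_of_tendsto_mul_atTop p
    (tendsto_mul_gammaMeasure_real_Iic hk0 ham hlim ht)).congr fun m => (hcount m).symm

/-- Convergence of the binomial counts of i.i.d. Gamma(k, 1/a_m) variables below level `t`
to a Poisson(a t^k / k!) distribution, when `m a_m^k → a ∈ (0,∞)`. -/
theorem gamma_count_tendsto_poisson
    (k : ℕ) (hk : 1 ≤ k) (a : ℝ) (ha : 0 < a)
    (am : ℕ → ℝ) (ham : ∀ m, 0 < am m)
    (hlim : Tendsto (fun m : ℕ => (m : ℝ) * (am m) ^ k) atTop (nhds a))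
    (Ω : ℕ → Type*) (mΩ : ∀ m, MeasurableSpace (Ω m))
    (μ : ∀ m, Measure (Ω m)) (hμ : ∀ m, IsProbabilityMeasure (μ m))
    (G : ∀ m, Fin m → Ω m → ℝ)
    (hmeas : ∀ m i, Measurable (G m i))
    (hindep : ∀ m, iIndepFun (G m) (μ m))
    (hlaw : ∀ m i, Measure.map (G m i) (μ m) = gammaMeasure k (am m))
    (t : ℝ) (ht : 0 ≤ t) (p : ℕ) :
    Tendsto
      (fun m : ℕ =>
        ((μ m) {ω | (Finset.univ.filter (fun i : Fin m => G m i ω ≤ t)).card = p}).toReal)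
      atTop
      (nhds ((a * t ^ k / (Nat.factorial k)) ^ p *
        Real.exp (-(a * t ^ k / (Nat.factorial k))) / (Nat.factorial p))) :=
  gamma_count_tendsto_poisson_general k hk a am ham hlim Ω mΩ μ hμ G hmeas hindep hlaw t ht p
end

section
/- Let k ≥ 1 be an integer, a_m > 0 with m·a_m^k → a ∈ (0,∞), G a Gamma(k,1) random variable, and t > s ≥ 0. Then the conditional probability P(G ≤ a_m t | G > a_m s) satisfies m·P(G ≤ a_m t | G > a_m s) → a(t^k − s^k)/k! as m → ∞. -/
/-!
On `[u, v] ⊆ [0, ∞)` the density `x ^ n * exp (-x) / n !` lies between `exp (-v) * x ^ n / n !`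
and `x ^ n / n !`, so `F (a_m t) - F (a_m s)` equals `a_m ^ k * (t ^ k - s ^ k) / k !` up to a
factor in `[exp (-a_m t), 1]`. Since `m * a_m ^ k` converges, `a_m → 0`: the factor tends to `1`
and the conditioning event has probability `1 - F (a_m s) → 1`.
-/

open MeasureTheory Real Set Filter Topology
open scoped Nat

lemma integral_pow_div_factorial (n : ℕ) (u v : ℝ) :
    ∫ x in u..v, x ^ n / (n ! : ℝ) = (v ^ (n + 1) - u ^ (n + 1)) / ((n + 1)! : ℝ) := by
  rw [intervalIntegral.integral_div, integral_pow, Nat.factorial_succ]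
  push_cast
  field_simp

lemma intervalIntegrable_pow_mul_exp_neg_div (n : ℕ) (u v : ℝ) :
    IntervalIntegrable (fun x : ℝ => x ^ n * exp (-x) / (n ! : ℝ)) volume u v :=
  (by fun_prop : Continuous _).intervalIntegrable u v

lemma integral_pow_mul_exp_neg_le {n : ℕ} {u v : ℝ} (hu : 0 ≤ u) (huv : u ≤ v) :
    ∫ x in u..v, x ^ n * exp (-x) / (n ! : ℝ) ≤
      (v ^ (n + 1) - u ^ (n + 1)) / ((n + 1)! : ℝ) := by
  rw [← integral_pow_div_factorial]
  refine intervalIntegral.integral_mono_on huv (intervalIntegrable_pow_mul_exp_neg_div n u v)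
    (Continuous.intervalIntegrable (by fun_prop) u v) fun x hx => ?_
  have hx0 : 0 ≤ x := hu.trans hx.1
  gcongr
  exact mul_le_of_le_one_right (by positivity) (exp_le_one_iff.mpr (by linarith))

lemma exp_neg_mul_le_integral_pow_mul_exp_neg {n : ℕ} {u v : ℝ} (hu : 0 ≤ u) (huv : u ≤ v) :
    exp (-v) * ((v ^ (n + 1) - u ^ (n + 1)) / ((n + 1)! : ℝ)) ≤
      ∫ x in u..v, x ^ n * exp (-x) / (n ! : ℝ) := by
  rw [← integral_pow_div_factorial, ← intervalIntegral.integral_const_mul]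
  refine intervalIntegral.integral_mono_on huv (Continuous.intervalIntegrable (by fun_prop) u v)
    (intervalIntegrable_pow_mul_exp_neg_div n u v) fun x hx => ?_
  have hx0 : 0 ≤ x := hu.trans hx.1
  rw [mul_div_assoc', mul_comm (exp _)]
  gcongr
  exact hx.2

lemma tendsto_zero_of_tendsto_natCast_mul_pow {c : ℕ → ℝ} (hc : ∀ m, 0 ≤ c m) {k : ℕ}
    (hk : k ≠ 0) {a : ℝ} (h : Tendsto (fun m : ℕ => (m : ℝ) * c m ^ k) atTop (𝓝 a)) :
    Tendsto c atTop (𝓝 0) := by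
  have hpow : Tendsto (fun m => c m ^ k) atTop (𝓝 0) := by
    have := h.mul (tendsto_inv_atTop_zero.comp tendsto_natCast_atTop_atTop)
    rw [mul_zero] at this
    refine this.congr' ?_
    filter_upwards [eventually_ne_atTop 0] with m hm
    have : (m : ℝ) ≠ 0 := Nat.cast_ne_zero.mpr hm
    simp only [Function.comp_apply]
    field_simp
  have hroot := hpow.rpow_const (p := (k : ℝ)⁻¹) (Or.inr (by positivity))
  rw [zero_rpow (by positivity)] at hroot
  exact hroot.congr fun m => pow_rpow_inv_natCast (hc m) hk

lemma tendsto_natCast_mul_integral_pow_mul_exp_neg {n : ℕ} {c : ℕ → ℝ}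
    (hc : ∀ m, 0 ≤ c m) {a : ℝ}
    (h : Tendsto (fun m : ℕ => (m : ℝ) * c m ^ (n + 1)) atTop (𝓝 a))
    {s t : ℝ} (hs : 0 ≤ s) (hst : s ≤ t) :
    Tendsto (fun m : ℕ => (m : ℝ) * ∫ x in c m * s..c m * t, x ^ n * exp (-x) / (n ! : ℝ))
      atTop (𝓝 (a * (t ^ (n + 1) - s ^ (n + 1)) / ((n + 1)! : ℝ))) := by
  set L := (t ^ (n + 1) - s ^ (n + 1)) / ((n + 1)! : ℝ)
  have hmain : Tendsto (fun m : ℕ => (m : ℝ) * c m ^ (n + 1) * L) atTop (𝓝 (a * L)) :=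
    h.mul_const L
  have hexp : Tendsto (fun m => exp (-(c m * t))) atTop (𝓝 1) := by
    have hc0 := tendsto_zero_of_tendsto_natCast_mul_pow hc n.succ_ne_zero h
    simpa using (hc0.mul_const t).neg.rexp
  have hbounds : ∀ m, exp (-(c m * t)) * (c m ^ (n + 1) * L) ≤
      ∫ x in c m * s..c m * t, x ^ n * exp (-x) / (n ! : ℝ) ∧
      ∫ x in c m * s..c m * t, x ^ n * exp (-x) / (n ! : ℝ) ≤ c m ^ (n + 1) * L := by
    intro m
    have hscale : ((c m * t) ^ (n + 1) - (c m * s) ^ (n + 1)) / ((n + 1)! : ℝ) =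
        c m ^ (n + 1) * L := by
      rw [mul_pow, mul_pow]; ring
    have hu : 0 ≤ c m * s := mul_nonneg (hc m) hs
    have huv : c m * s ≤ c m * t := mul_le_mul_of_nonneg_left hst (hc m)
    rw [← hscale]
    exact ⟨exp_neg_mul_le_integral_pow_mul_exp_neg hu huv, integral_pow_mul_exp_neg_le hu huv⟩
  rw [mul_div_assoc]
  refine tendsto_of_tendsto_of_tendsto_of_le_of_le (by simpa using hexp.mul hmain) hmain
    (fun m => ?_) (fun m => ?_)
  · calc exp (-(c m * t)) * ((m : ℝ) * c m ^ (n + 1) * L)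
        = m * (exp (-(c m * t)) * (c m ^ (n + 1) * L)) := by ring
      _ ≤ _ := by gcongr; exact (hbounds m).1
  · calc (m : ℝ) * ∫ x in c m * s..c m * t, x ^ n * exp (-x) / (n ! : ℝ)
        ≤ m * (c m ^ (n + 1) * L) := by gcongr; exact (hbounds m).2
      _ = _ := by ring

theorem gamma_conditional_prob_asymptotics_general
    (k : ℕ) (hk : 1 ≤ k) (a : ℝ)
    (am : ℕ → ℝ) (ham : ∀ m, 0 < am m)
    (hlim : Tendsto (fun m : ℕ => (m : ℝ) * (am m) ^ k) atTop (nhds a))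
    (F : ℝ → ℝ)
    (hF : ∀ u : ℝ, F u = ∫ x in Set.Ioc (0:ℝ) u,
      x ^ (k - 1) * Real.exp (-x) / (Nat.factorial (k - 1)))
    (s t : ℝ) (hs : 0 ≤ s) (hst : s < t) :
    Tendsto
      (fun m : ℕ => (m : ℝ) * ((F (am m * t) - F (am m * s)) / (1 - F (am m * s))))
      atTop
      (nhds (a * (t ^ k - s ^ k) / (Nat.factorial k))) := by
  obtain ⟨n, rfl⟩ : ∃ n, k = n + 1 := ⟨k - 1, by omega⟩
  have hc : ∀ m, 0 ≤ am m := fun m => (ham m).le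
  have hF' : ∀ u, 0 ≤ u → F u = ∫ x in (0 : ℝ)..u, x ^ n * exp (-x) / (n ! : ℝ) := by
    intro u hu
    rw [hF, intervalIntegral.integral_of_le hu, Nat.add_sub_cancel]
  have hnum : ∀ m, F (am m * t) - F (am m * s) =
      ∫ x in am m * s..am m * t, x ^ n * exp (-x) / (n ! : ℝ) := by
    intro m
    rw [hF' _ (mul_nonneg (hc m) (hs.trans hst.le)), hF' _ (mul_nonneg (hc m) hs)]
    exact intervalIntegral.integral_interval_sub_left
      (intervalIntegrable_pow_mul_exp_neg_div n _ _) (intervalIntegrable_pow_mul_exp_neg_div n _ _)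
  have hFs : Tendsto (fun m => F (am m * s)) atTop (𝓝 0) := by
    have hprim :=
      intervalIntegral.continuous_primitive (intervalIntegrable_pow_mul_exp_neg_div n) 0
    have hcs : Tendsto (fun m => am m * s) atTop (𝓝 0) := by
      simpa using (tendsto_zero_of_tendsto_natCast_mul_pow hc n.succ_ne_zero hlim).mul_const s
    have := (hprim.tendsto 0).comp hcs
    rw [intervalIntegral.integral_same] at this
    exact this.congr fun m => (hF' _ (mul_nonneg (hc m) hs)).symm
  have := (tendsto_natCast_mul_integral_pow_mul_exp_neg hc hlim hs hst.le).div
    (tendsto_const_nhds.sub hFs) (by norm_num : (1 : ℝ) - 0 ≠ 0)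
  rw [sub_zero, div_one] at this
  exact this.congr fun m => by rw [Pi.div_apply, hnum, mul_div_assoc]

/-- For a Gamma(k,1) variable `G` and `t > s ≥ 0`, with `m a_m^k → a ∈ (0,∞)`,
`m · P(G ≤ a_m t | G > a_m s) → a (t^k − s^k)/k!`. Here `F` denotes the CDF of `G`. -/
theorem gamma_conditional_prob_asymptotics
    (k : ℕ) (hk : 1 ≤ k) (a : ℝ) (ha : 0 < a)
    (am : ℕ → ℝ) (ham : ∀ m, 0 < am m)
    (hlim : Tendsto (fun m : ℕ => (m : ℝ) * (am m) ^ k) atTop (nhds a))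
    (F : ℝ → ℝ)
    (hF : ∀ u : ℝ, F u = ∫ x in Set.Ioc (0:ℝ) u,
      x ^ (k - 1) * Real.exp (-x) / (Nat.factorial (k - 1)))
    (s t : ℝ) (hs : 0 ≤ s) (hst : s < t) :
    Tendsto
      (fun m : ℕ => (m : ℝ) * ((F (am m * t) - F (am m * s)) / (1 - F (am m * s))))
      atTop
      (nhds (a * (t ^ k - s ^ k) / (Nat.factorial k))) :=
  gamma_conditional_prob_asymptotics_general k hk a am ham hlim F hF s t hs hst
end

section
/- Fix an integer k ≥ 1 and a constant C > 0. Suppose μ_n(t) are random variables with values in [0,1] satisfying n·E[μ_n(t)] ≤ C p(t)/(1−p(t))², where p(t) = P(G > t) is the tail of a Gamma(k,1) variable, and let δ_n = σ^{1/k} n^{−1/(2k)} for some σ > 0. Then lim_{t→∞} limsup_{n} E[∫_t^∞ μ_n(δ_n s) ds] = 0. -/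
/-!
Let `p` be the Erlang(k) tail. From `p(u) ≤ 2ᵏ e^{-u/2}` and `1 - p(u) ≥ uᵏ e^{-u} / k!` one gets
`p(u) / (1 - p(u))² ≤ A (u^{-2k} + e^{-u/2})`: the first term controls small `u`, the second
large `u`. Since `n δₙ^{2k} = σ²`, the hypothesis then gives
`f n (δₙ s) ≤ (CA/σ²) s^{-2k} + (CA/n) e^{-δₙ s/2}`, and integrating over `s > t`,
`∫ ≤ (CA/σ²) t^{1-2k}/(2k-1) + 2CA/(n δₙ)`. As `n δₙ → ∞`, the limsup in `n` is at most the
first term, which vanishes as `t → ∞`.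
-/

open MeasureTheory Real Set Filter
open scoped Nat Topology

noncomputable def erlangDensity (k : ℕ) (x : ℝ) : ℝ := x ^ (k - 1) * exp (-x) / (k - 1)!

noncomputable def erlangTail (k : ℕ) (t : ℝ) : ℝ := ∫ x in Ioi t, erlangDensity k x

theorem pow_mul_exp_neg_div_factorial_le (m : ℕ) {x : ℝ} (hx : 0 ≤ x) :
    x ^ m * exp (-x) / m ! ≤ 2 ^ m * exp (-2⁻¹ * x) := by
  have h := pow_div_factorial_le_exp (x / 2) (by positivity) m
  calc x ^ m * exp (-x) / m ! = 2 ^ m * ((x / 2) ^ m / m !) * exp (-x) := by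
        rw [div_pow]; field_simp
    _ ≤ 2 ^ m * exp (x / 2) * exp (-x) := by gcongr
    _ = 2 ^ m * exp (-2⁻¹ * x) := by rw [mul_assoc, ← exp_add]; ring_nf

section Erlang

variable {k : ℕ}

theorem continuous_erlangDensity : Continuous (erlangDensity k) := by
  unfold erlangDensity; fun_prop

theorem erlangDensity_nonneg {x : ℝ} (hx : 0 ≤ x) : 0 ≤ erlangDensity k x := by
  unfold erlangDensity; positivity

theorem integrableOn_erlangDensity {t : ℝ} (ht : 0 ≤ t) :
    IntegrableOn (erlangDensity k) (Ioi t) := by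
  refine ((exp_neg_integrableOn_Ioi t (inv_pos.2 zero_lt_two)).const_mul (2 ^ (k - 1))).mono'
    continuous_erlangDensity.aestronglyMeasurable ?_
  filter_upwards [self_mem_ae_restrict measurableSet_Ioi] with x hx
  have hx0 : 0 ≤ x := ht.trans hx.le
  rw [norm_of_nonneg (erlangDensity_nonneg hx0)]
  exact pow_mul_exp_neg_div_factorial_le _ hx0

theorem erlangTail_nonneg {t : ℝ} (ht : 0 ≤ t) : 0 ≤ erlangTail k t :=
  setIntegral_nonneg measurableSet_Ioi fun _ hx => erlangDensity_nonneg (ht.trans hx.le)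

theorem erlangTail_zero (hk : 1 ≤ k) : erlangTail k 0 = 1 := by
  have hk' : ((k - 1 : ℕ) : ℝ) + 1 = k := by rw [Nat.cast_sub hk]; ring
  have hGamma : Gamma k = (k - 1)! := by rw [← hk', Gamma_nat_eq_factorial]
  calc erlangTail k 0 = Gamma k / (k - 1)! := by
        rw [Gamma_eq_integral (by positivity), ← integral_div]
        refine setIntegral_congr_fun measurableSet_Ioi fun x _ => ?_
        rw [erlangDensity, ← hk', add_sub_cancel_right, rpow_natCast, mul_comm]
    _ = 1 := by rw [hGamma, div_self (by positivity)]

theorem one_sub_erlangTail (hk : 1 ≤ k) {u : ℝ} (hu : 0 ≤ u) :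
    1 - erlangTail k u = ∫ x in Ioc 0 u, erlangDensity k x := by
  rw [← erlangTail_zero hk, erlangTail, erlangTail, ← Ioc_union_Ioi_eq_Ioi hu,
    setIntegral_union Ioc_disjoint_Ioi_same measurableSet_Ioi
      continuous_erlangDensity.integrableOn_Ioc (integrableOn_erlangDensity hu)]
  ring

theorem erlangTail_antitoneOn : AntitoneOn (erlangTail k) (Ici 0) := fun _ ht _ _ htu =>
  setIntegral_mono_set (integrableOn_erlangDensity ht)
    (ae_restrict_of_forall_mem measurableSet_Ioi fun _ hx => erlangDensity_nonneg (ht.trans hx.le))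
    (Ioi_subset_Ioi htu).eventuallyLE

theorem erlangTail_le (hk : 1 ≤ k) {t : ℝ} (ht : 0 ≤ t) :
    erlangTail k t ≤ 2 ^ k * exp (-2⁻¹ * t) := by
  calc erlangTail k t ≤ ∫ x in Ioi t, 2 ^ (k - 1) * exp (-2⁻¹ * x) :=
        setIntegral_mono_on (integrableOn_erlangDensity ht)
          ((exp_neg_integrableOn_Ioi t (inv_pos.2 zero_lt_two)).const_mul _) measurableSet_Ioi
          fun x hx => pow_mul_exp_neg_div_factorial_le _ (ht.trans hx.le)
    _ = 2 ^ k * exp (-2⁻¹ * t) := by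
        rw [integral_const_mul, integral_exp_mul_Ioi (by norm_num), ← pow_sub_mul_pow 2 hk]
        ring

theorem pow_mul_exp_neg_div_factorial_le_one_sub_erlangTail (hk : 1 ≤ k) {u : ℝ} (hu : 0 ≤ u) :
    u ^ k * exp (-u) / k ! ≤ 1 - erlangTail k u := by
  rw [one_sub_erlangTail hk hu]
  calc u ^ k * exp (-u) / k ! = ∫ x in Ioc 0 u, x ^ (k - 1) * exp (-u) / (k - 1)! := by
        rw [integral_div, integral_mul_const, ← intervalIntegral.integral_of_le hu, integral_pow,
          Nat.sub_add_cancel hk, ← Nat.mul_factorial_pred (by omega : k ≠ 0), Nat.cast_mul,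
          Nat.cast_pred (by omega), zero_pow (by omega), sub_zero, sub_add_cancel]
        field_simp
    _ ≤ ∫ x in Ioc 0 u, erlangDensity k x :=
        setIntegral_mono_on (by fun_prop : Continuous _).integrableOn_Ioc
          continuous_erlangDensity.integrableOn_Ioc measurableSet_Ioc fun x hx => by
            unfold erlangDensity; gcongr
            exacts [pow_nonneg hx.1.le _, hx.2]

theorem exists_erlangTail_div_one_sub_sq_le (hk : 1 ≤ k) :
    ∃ A, 0 ≤ A ∧ ∀ u > 0, erlangTail k u / (1 - erlangTail k u) ^ 2 ≤
      A * (u ^ (-(2 * k : ℝ)) + exp (-2⁻¹ * u)) := by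
  refine ⟨2 ^ k * (exp 1 * k !) ^ 2, by positivity, fun u hu => ?_⟩
  have hp := erlangTail_le hk hu.le
  have hratio {P L : ℝ} (hP : erlangTail k u ≤ P) (hL : 0 < L) (hLp : L ≤ 1 - erlangTail k u) :
      erlangTail k u / (1 - erlangTail k u) ^ 2 ≤ P / L ^ 2 :=
    div_le_div₀ ((erlangTail_nonneg hu.le).trans hP) hP (by positivity)
      (pow_le_pow_left₀ hL.le hLp 2)
  rcases le_total u 1 with hu1 | hu1
  · have hL : u ^ k * exp (-1) / k ! ≤ 1 - erlangTail k u :=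
      calc u ^ k * exp (-1) / k ! ≤ u ^ k * exp (-u) / k ! := by gcongr
        _ ≤ 1 - erlangTail k u := pow_mul_exp_neg_div_factorial_le_one_sub_erlangTail hk hu.le
    have hP : erlangTail k u ≤ 2 ^ k :=
      hp.trans (mul_le_of_le_one_right (by positivity) (exp_le_one_iff.2 (by linarith)))
    calc _ ≤ 2 ^ k / (u ^ k * exp (-1) / k !) ^ 2 := hratio hP (by positivity) hL
      _ = 2 ^ k * (exp 1 * k !) ^ 2 * u ^ (-(2 * k : ℝ)) := by
          rw [rpow_neg hu.le, show (2 * k : ℝ) = ((2 * k : ℕ) : ℝ) by push_cast; ring,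
            rpow_natCast, exp_neg, mul_comm 2 k, pow_mul]
          field_simp
      _ ≤ _ := by gcongr; exact le_add_of_nonneg_right (exp_pos _).le
  · have hL : exp (-1) / k ! ≤ 1 - erlangTail k u :=
      calc exp (-1) / k ! = 1 ^ k * exp (-1) / k ! := by rw [one_pow, one_mul]
        _ ≤ 1 - erlangTail k 1 :=
            pow_mul_exp_neg_div_factorial_le_one_sub_erlangTail hk zero_le_one
        _ ≤ 1 - erlangTail k u := by
            gcongr
            exact erlangTail_antitoneOn (mem_Ici.2 zero_le_one) (mem_Ici.2 hu.le) hu1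
    calc _ ≤ 2 ^ k * exp (-2⁻¹ * u) / (exp (-1) / k !) ^ 2 := hratio hp (by positivity) hL
      _ = 2 ^ k * (exp 1 * k !) ^ 2 * exp (-2⁻¹ * u) := by rw [exp_neg]; field_simp
      _ ≤ _ := by gcongr; exact le_add_of_nonneg_left (by positivity)

end Erlang

theorem setIntegral_Ioi_le_of_le_rpow_add_exp {g : ℝ → ℝ} {a b c r t : ℝ} (hr : 1 < r)
    (hb : 0 ≤ b) (hc : 0 < c) (ht : 0 < t) (hg0 : ∀ s > t, 0 ≤ g s)
    (hg : ∀ s > t, g s ≤ a * s ^ (-r) + b * exp (-c * s)) :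
    ∫ s in Ioi t, g s ≤ a * (t ^ (-(r - 1)) / (r - 1)) + b / c := by
  have hpow := (integrableOn_Ioi_rpow_of_lt (by linarith : -r < -1) ht).const_mul a
  have hexp := (exp_neg_integrableOn_Ioi t hc).const_mul b
  calc ∫ s in Ioi t, g s ≤ ∫ s in Ioi t, (a * s ^ (-r) + b * exp (-c * s)) :=
        integral_mono_of_nonneg (ae_restrict_of_forall_mem measurableSet_Ioi hg0) (hpow.add hexp)
          (ae_restrict_of_forall_mem measurableSet_Ioi hg)
    _ = a * (t ^ (-(r - 1)) / (r - 1)) + b * (exp (-c * t) / c) := by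
        rw [integral_add hpow hexp, integral_const_mul, integral_const_mul,
          integral_Ioi_rpow_of_lt (by linarith) ht, integral_exp_mul_Ioi (by linarith),
          show -r + 1 = -(r - 1) by ring]
        have : r - 1 ≠ 0 := by linarith
        field_simp
    _ ≤ a * (t ^ (-(r - 1)) / (r - 1)) + b / c := by
        have : exp (-c * t) ≤ 1 := exp_le_one_iff.2 (by nlinarith)
        rw [← mul_one_div b c]
        gcongr

theorem tendsto_limsup_of_le_add {α β : Type*} {l : Filter α} {l' : Filter β} [l'.NeBot]
    {a : α → β → ℝ} {B : α → ℝ} {ε : β → ℝ} (ha : ∀ t n, 0 ≤ a t n)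
    (hB : Tendsto B l (𝓝 0)) (hε : Tendsto ε l' (𝓝 0))
    (h : ∀ᶠ t in l, ∀ᶠ n in l', a t n ≤ B t + ε n) :
    Tendsto (fun t => limsup (a t) l') l (𝓝 0) := by
  have hbound : ∀ᶠ t in l, 0 ≤ limsup (a t) l' ∧ limsup (a t) l' ≤ B t := h.mono fun t ht => by
    have hB' := hε.const_add (B t)
    rw [add_zero] at hB'
    exact ⟨le_limsup_of_frequently_le (.of_forall (ha t)) (hB'.isBoundedUnder_le.mono_le ht),
      (limsup_le_limsup ht (isCoboundedUnder_le_of_le l' (ha t)) hB'.isBoundedUnder_le).trans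
        hB'.limsup_eq.le⟩
  exact tendsto_of_tendsto_of_tendsto_of_le_of_le' tendsto_const_nhds hB
    (hbound.mono fun _ => And.left) (hbound.mono fun _ => And.right)

noncomputable def deltaScale (σ : ℝ) (k : ℕ) (x : ℝ) : ℝ :=
  σ ^ ((1 : ℝ) / k) * x ^ (-(1 / (2 * (k : ℝ))))

section DeltaScale

variable {σ : ℝ} {k : ℕ}

theorem deltaScale_pos (hσ : 0 < σ) {x : ℝ} (hx : 0 < x) : 0 < deltaScale σ k x :=
  mul_pos (rpow_pos_of_pos hσ _) (rpow_pos_of_pos hx _)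

theorem deltaScale_rpow_neg_two_mul (hσ : 0 < σ) (hk : k ≠ 0) {x : ℝ} (hx : 0 < x) :
    deltaScale σ k x ^ (-(2 * k : ℝ)) = x / σ ^ 2 := by
  rw [deltaScale, mul_rpow (rpow_nonneg hσ.le _) (rpow_nonneg hx.le _), ← rpow_mul hσ.le,
    ← rpow_mul hx.le, show 1 / (k : ℝ) * -(2 * k) = -2 by field_simp,
    show -(1 / (2 * (k : ℝ))) * -(2 * k) = 1 by field_simp, rpow_one, rpow_neg hσ.le]
  norm_cast
  ring

theorem tendsto_natCast_mul_deltaScale (hσ : 0 < σ) (hk : 1 ≤ k) :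
    Tendsto (fun n : ℕ => n * deltaScale σ k n) atTop atTop := by
  have hexp : 0 < 1 - 1 / (2 * (k : ℝ)) := by
    rw [sub_pos, div_lt_one (by positivity)]
    linarith [(Nat.one_le_cast (α := ℝ)).2 hk]
  refine (((tendsto_rpow_atTop hexp).comp tendsto_natCast_atTop_atTop).const_mul_atTop
    (rpow_pos_of_pos hσ (1 / k))).congr' ((eventually_gt_atTop 0).mono fun n hn => ?_)
  rw [Function.comp_apply, sub_eq_add_neg, rpow_add (by exact_mod_cast hn), rpow_one]
  unfold deltaScale
  ring

theorem tendsto_div_natCast_div_deltaScale (hσ : 0 < σ) (hk : 1 ≤ k) (c : ℝ) :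
    Tendsto (fun n : ℕ => c / n / (deltaScale σ k n / 2)) atTop (𝓝 0) := by
  have h := (tendsto_natCast_mul_deltaScale hσ hk).inv_tendsto_atTop.const_mul (2 * c)
  rw [mul_zero] at h
  refine h.congr' ((eventually_gt_atTop 0).mono fun n hn => ?_)
  have := deltaScale_pos (k := k) hσ (Nat.cast_pos.2 hn)
  simp only [Pi.inv_apply]
  field_simp

theorem le_rpow_add_exp_of_natCast_mul_le {n : ℕ} {R : ℝ → ℝ} {A C s y : ℝ} (hk : k ≠ 0)
    (hC : 0 ≤ C) (hσ : 0 < σ) (hn : 0 < n) (hs : 0 < s)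
    (hR : R (deltaScale σ k n * s) ≤
      A * ((deltaScale σ k n * s) ^ (-(2 * k : ℝ)) + exp (-2⁻¹ * (deltaScale σ k n * s))))
    (hy : n * y ≤ C * R (deltaScale σ k n * s)) :
    y ≤ C * A / σ ^ 2 * s ^ (-(2 * k : ℝ)) + C * A / n * exp (-(deltaScale σ k n / 2) * s) := by
  have hn0 : (0 : ℝ) < n := Nat.cast_pos.2 hn
  have hδ0 := deltaScale_pos (k := k) hσ hn0
  calc y ≤ C / n * R (deltaScale σ k n * s) := by
        rwa [div_mul_eq_mul_div, le_div_iff₀ hn0, mul_comm]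
    _ ≤ C / n * (A * ((deltaScale σ k n * s) ^ (-(2 * k : ℝ)) +
          exp (-2⁻¹ * (deltaScale σ k n * s)))) := by gcongr
    _ = C * A / σ ^ 2 * s ^ (-(2 * k : ℝ)) + C * A / n * exp (-(deltaScale σ k n / 2) * s) := by
        rw [mul_rpow hδ0.le hs.le, deltaScale_rpow_neg_two_mul hσ hk hn0]
        field_simp

end DeltaScale

-- `f n t` models `E[μ_n(t)]`; by Tonelli the expectation moves inside the `s`-integral.
/-- If `n E[μ_n(t)] ≤ C p(t)/(1-p(t))²` with `p` the Gamma(k,1) tail and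
`δ_n = σ^{1/k} n^{-1/(2k)}`, then `lim_{t→∞} limsup_n E[∫_t^∞ μ_n(δ_n s) ds] = 0`.
Here `f n t` stands for `E[μ_n(t)] ∈ [0,1]`. -/
theorem limsup_integral_tail_zero
    (k : ℕ) (hk : 1 ≤ k) (C σ : ℝ) (hC : 0 < C) (hσ : 0 < σ)
    (p : ℝ → ℝ)
    (hp : ∀ t : ℝ, p t = ∫ x in Set.Ioi t,
      x ^ (k - 1) * Real.exp (-x) / (Nat.factorial (k - 1)))
    (f : ℕ → ℝ → ℝ)
    (hf01 : ∀ n t, 0 ≤ f n t ∧ f n t ≤ 1)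
    (δ : ℕ → ℝ)
    (hδ : ∀ n : ℕ, δ n = σ ^ ((1:ℝ)/k) * (n : ℝ) ^ (-(1 / (2 * (k:ℝ)))))
    (hbound : ∀ n : ℕ, 1 ≤ n → ∀ t : ℝ, 0 < t →
      (n : ℝ) * f n t ≤ C * p t / (1 - p t) ^ 2) :
    Tendsto
      (fun t : ℝ =>
        Filter.limsup (fun n : ℕ => ∫ s in Set.Ioi t, f n (δ n * s)) atTop)
      atTop (nhds 0) := by
  obtain rfl : p = erlangTail k := funext hp
  obtain rfl : δ = fun n : ℕ => deltaScale σ k n := funext hδ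
  obtain ⟨A, hA, hratio⟩ := exists_erlangTail_div_one_sub_sq_le hk
  have hk1 : (1 : ℝ) ≤ k := by exact_mod_cast hk
  refine tendsto_limsup_of_le_add
    (fun t n => setIntegral_nonneg measurableSet_Ioi fun s _ => (hf01 n _).1)
    (B := fun t => C * A / σ ^ 2 * (t ^ (-(2 * k - 1 : ℝ)) / (2 * k - 1)))
    ?_ (tendsto_div_natCast_div_deltaScale hσ hk (C * A)) ?_
  · simpa using ((tendsto_rpow_neg_atTop (by linarith : (0 : ℝ) < 2 * k - 1)).div_const
      (2 * k - 1 : ℝ)).const_mul (C * A / σ ^ 2)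
  filter_upwards [eventually_gt_atTop 0] with t ht
  filter_upwards [eventually_ge_atTop 1] with n hn
  have hδ0 := deltaScale_pos (k := k) hσ (Nat.cast_pos.2 hn)
  refine setIntegral_Ioi_le_of_le_rpow_add_exp (by linarith) (by positivity) (half_pos hδ0) ht
    (fun s _ => (hf01 n _).1) fun s hs => ?_
  have hu : 0 < deltaScale σ k n * s := mul_pos hδ0 (ht.trans hs)
  exact le_rpow_add_exp_of_natCast_mul_le (R := fun u => erlangTail k u / (1 - erlangTail k u) ^ 2)
    (by omega) hC.le hσ hn (ht.trans hs) (hratio _ hu)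
    ((hbound n hn _ hu).trans_eq (mul_div_assoc _ _ _))
end
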